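/- arXiv:1509.05127 — 7 statements merged into one kernel-verified Lean document; each statement's English description precedes it below -/
import Mathlib

section
/- Let n ≥ 1, let A₀ be the n×n real matrix with ones on the subdiagonal ((A₀)_{i,j} = 1 if i = j+1 and 0 otherwise), let b₀ = e₁ be the first standard basis vector of ℝⁿ, let H be the n×n diagonal matrix with diagonal entries −(2i−1)/2 for i = 1,…,n, and let a = (a₁,…,aₙ)ᵀ ∈ ℝⁿ. If there exists a symmetric positive definite n×n matrix F such that F·M + Mᵀ·F = 0, where M = A₀ + b₀aᵀ + (1/2)I − H, then a₁ = −n(n+1)/2. -/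
open Matrix

lemma sum_range_cast (n : ℕ) : ∑ i ∈ Finset.range n, ((i : ℕ) : ℝ) = (n : ℝ) * (n - 1) / 2 := by
  induction n with
  | zero => simp
  | succ k ih => rw [Finset.sum_range_succ, ih]; push_cast; ring

/-- For the canonical system, if a symmetric positive definite `F` satisfies the
matrix Lyapunov-type equality `F·M + Mᵀ·F = 0` with
`M = A₀ + b₀aᵀ + (1/2)I − H`, then `a₁ = −n(n+1)/2`. -/
theorem stmt0 (n : ℕ) (hn : 1 ≤ n) (a : Fin n → ℝ)
    (A₀ : Matrix (Fin n) (Fin n) ℝ)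
    (hA₀ : A₀ = Matrix.of fun i j : Fin n => if i.val = j.val + 1 then (1 : ℝ) else 0)
    (b₀ : Fin n → ℝ)
    (hb₀ : b₀ = fun i : Fin n => if i.val = 0 then (1 : ℝ) else 0)
    (H : Matrix (Fin n) (Fin n) ℝ)
    (hH : H = Matrix.diagonal fun i : Fin n => -((2 * (i.val : ℝ) + 1) / 2))
    (M : Matrix (Fin n) (Fin n) ℝ)
    (hM : M = A₀ + Matrix.vecMulVec b₀ a + (1 / 2 : ℝ) • 1 - H)
    (F : Matrix (Fin n) (Fin n) ℝ)
    (hF : F.PosDef)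
    (hLyap : F * M + Mᵀ * F = 0) :
    a ⟨0, hn⟩ = -(n * (n + 1) / 2 : ℝ) := by
  have hd : IsUnit F.det := (Matrix.isUnit_iff_isUnit_det F).mp hF.isUnit
  have hFM : F * M = -(Mᵀ * F) := by rwa [add_eq_zero_iff_eq_neg] at hLyap
  have htr : M.trace = -M.trace := by
    calc M.trace = (F⁻¹ * (F * M)).trace := by
          rw [← Matrix.mul_assoc, Matrix.nonsing_inv_mul F hd, Matrix.one_mul]
      _ = (F⁻¹ * -(Mᵀ * F)).trace := by rw [hFM]
      _ = -((F⁻¹ * (Mᵀ * F)).trace) := by rw [Matrix.mul_neg, trace_neg]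
      _ = -(((Mᵀ * F) * F⁻¹).trace) := by rw [trace_mul_comm]
      _ = -(Mᵀ.trace) := by
          rw [Matrix.mul_assoc, Matrix.mul_nonsing_inv F hd, Matrix.mul_one]
      _ = -M.trace := by rw [trace_transpose]
  have htr0 : M.trace = 0 := by linarith
  have hA₀tr : A₀.trace = 0 := by
    subst hA₀
    simp [Matrix.trace, Matrix.diag]
  have hVtr : (Matrix.vecMulVec b₀ a).trace = a ⟨0, hn⟩ := by
    subst hb₀
    simp only [Matrix.trace, Matrix.diag, Matrix.vecMulVec_apply]
    rw [Finset.sum_eq_single (⟨0, hn⟩ : Fin n)]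
    · simp
    · intro b _ hb
      have : b.val ≠ 0 := fun h => hb (Fin.ext h)
      simp [this]
    · simp
  have hHtr : H.trace = -((n : ℝ) * n / 2) := by
    subst hH
    rw [trace_diagonal]
    have key : ∀ i : Fin n, -((2 * (i.val : ℝ) + 1) / 2) = -((i.val : ℝ)) - 1/2 := by
      intro i; ring
    rw [Finset.sum_congr rfl fun i _ => key i, Finset.sum_sub_distrib]
    rw [Finset.sum_neg_distrib, Fin.sum_univ_eq_sum_range (fun i => ((i : ℕ) : ℝ)),
      sum_range_cast]
    simp
    ring
  have htrM : M.trace = a ⟨0, hn⟩ + (n : ℝ) / 2 + ((n : ℝ) * n / 2) := by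
    subst hM
    rw [trace_sub, trace_add, trace_add, hA₀tr, hVtr, trace_smul, trace_one, hHtr]
    simp
    ring
  rw [htr0] at htrM
  have : a ⟨0, hn⟩ = -((n:ℝ) / 2 + ((n : ℝ) * n / 2)) := by linarith
  rw [this]; ring
end

section
/- Let n ≥ 1, let A₀ be the n×n matrix with ones on the subdiagonal, b₀ = e₁, H the diagonal matrix diag(−(2i−1)/2)_{i=1}^n, and a = (a₁,…,aₙ)ᵀ ∈ ℝⁿ. Then the characteristic polynomial of M = A₀ + b₀aᵀ + (1/2)I − H satisfies, for all λ ∈ ℝ: det(λI − M) = ∏_{j=1}^{n}(λ − j) − ∑_{j=1}^{n−1} a_j ∏_{i=j+1}^{n}(λ − i) − aₙ. In particular, the coefficient of λ^{n−1} in det(λI − M) equals −(a₁ + n(n+1)/2). -/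
open Matrix Finset

def Nmat (n : ℕ) (a : Fin n → ℝ) (lam : ℝ) : Matrix (Fin n) (Fin n) ℝ :=
  Matrix.of fun i j =>
    (if (i : ℕ) = (j : ℕ) then lam - ((i : ℕ) + 1) else 0)
      - (if (i : ℕ) = (j : ℕ) + 1 then 1 else 0)
      - (if (i : ℕ) = 0 then a j else 0)

lemma detN : ∀ (n : ℕ) (a : Fin (n+1) → ℝ) (lam : ℝ),
    (Nmat (n+1) a lam).det =
      (∏ j ∈ Finset.Icc 1 (n+1), (lam - (j : ℝ)))
        - (∑ j : Fin n, a (Fin.castLE n.le_succ j) *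
            ∏ i ∈ Finset.Icc ((j : ℕ) + 2) (n+1), (lam - (i : ℝ)))
        - a (Fin.last n) := by
  intro n
  induction n with
  | zero =>
      intro a lam
      simp [Nmat, Matrix.det_fin_one, Fin.last]
  | succ n ih =>
      intro a lam
      have hrec : (Nmat (n+2) a lam).det =
          (lam - ((n:ℝ) + 2)) * (Nmat (n+1) (a ∘ Fin.castSucc) lam).det
            - a (Fin.last (n+1)) := by
        rw [Matrix.det_succ_column (Nmat (n+2) a lam) (Fin.last (n+1))]
        rw [Fin.sum_univ_succ, Fin.sum_univ_castSucc]
        have hz : ∀ k : Fin n,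
            (-1 : ℝ) ^ ((((k.castSucc).succ : Fin (n+2)) : ℕ) + ((Fin.last (n+1) : Fin (n+2)) : ℕ)) *
              Nmat (n+2) a lam (k.castSucc).succ (Fin.last (n+1)) *
              ((Nmat (n+2) a lam).submatrix ((k.castSucc).succ).succAbove
                (Fin.last (n+1)).succAbove).det = 0 := by
          intro k
          have hk := k.isLt
          have h1 : Nmat (n+2) a lam (k.castSucc).succ (Fin.last (n+1)) = 0 := by
            simp only [Nmat, Matrix.of_apply, Fin.val_succ, Fin.coe_castSucc, Fin.val_last]
            rw [if_neg (by omega), if_neg (by omega), if_neg (by omega)]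
            ring
          rw [h1]; ring
        rw [Finset.sum_congr rfl (fun k _ => hz k), Finset.sum_const_zero, zero_add]
        -- term at i = 0
        have h0 : Nmat (n+2) a lam 0 (Fin.last (n+1)) = -a (Fin.last (n+1)) := by
          simp [Nmat]
        -- minor at (0, last) is upper triangular with -1 diagonal
        have hminor0 : ((Nmat (n+2) a lam).submatrix (0 : Fin (n+2)).succAbove
            (Fin.last (n+1)).succAbove).det = (-1 : ℝ) ^ (n+1) := by
          rw [Matrix.det_of_upperTriangular]
          · simp [Nmat, Fin.succAbove_last, Fin.succAbove_zero, Matrix.submatrix_apply]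
          · intro i j hij
            have : (j : ℕ) < (i : ℕ) := hij
            simp only [Matrix.submatrix_apply, Fin.succAbove_last, Fin.succAbove_zero, Nmat,
              Matrix.of_apply, Fin.val_succ, Fin.coe_castSucc]
            rw [if_neg (by omega), if_neg (by omega), if_neg (by omega)]
            ring
        -- term at i = last
        have hdiag : Nmat (n+2) a lam (Fin.last (n+1)) (Fin.last (n+1)) = lam - ((n:ℝ)+2) := by
          have e1 : (n+1 : ℕ) ≠ (n+1)+1 := by omega
          have e2 : (n+1 : ℕ) ≠ 0 := by omega
          simp [Nmat, e1, e2]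
          ring
        have hminor1 : ((Nmat (n+2) a lam).submatrix (Fin.last (n+1)).succAbove
            (Fin.last (n+1)).succAbove) = Nmat (n+1) (a ∘ Fin.castSucc) lam := by
          ext i j
          simp [Nmat, Fin.succAbove_last, Matrix.submatrix_apply]
        have hsucclast : ((Fin.last n).succ : Fin (n+2)) = Fin.last (n+1) := by
          ext; simp
        rw [hsucclast, hdiag, hminor1, h0, hminor0]
        simp only [Fin.val_zero, Fin.val_last, zero_add]
        have hp : ((-1:ℝ)) ^ (n+1) * (-1:ℝ) ^ (n+1) = 1 := by
          rw [← pow_add]; exact Even.neg_one_pow ⟨n+1, by ring⟩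
        have hp2 : ((-1:ℝ)) ^ ((n+1) + (n+1)) = 1 := Even.neg_one_pow ⟨n+1, by ring⟩
        rw [hp2]
        linear_combination (-(a (Fin.last (n+1)))) * hp
      rw [hrec, ih]
      rw [Fin.sum_univ_castSucc]
      rw [Finset.prod_Icc_succ_top (by omega : 1 ≤ (n+1)+1)]
      simp only [Function.comp_apply, Fin.val_last, Fin.coe_castSucc]
      have h2 : Finset.Icc (n+2) (n+1+1) = {n+2} := by
        rw [show n+1+1 = n+2 by omega]; exact Finset.Icc_self _
      rw [h2, Finset.prod_singleton]
      have h4 : (∑ j : Fin n, a (Fin.castLE (n+1).le_succ j.castSucc) *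
            ∏ i ∈ Finset.Icc ((j:ℕ)+2) (n+1+1), (lam - (i:ℝ))) =
          ∑ j : Fin n, (a (Fin.castSucc (Fin.castLE n.le_succ j)) *
            (∏ i ∈ Finset.Icc ((j:ℕ)+2) (n+1), (lam - (i:ℝ)))) * (lam - ((n:ℝ)+2)) := by
        refine Finset.sum_congr rfl fun j _ => ?_
        rw [Finset.prod_Icc_succ_top (by omega : (j:ℕ)+2 ≤ (n+1)+1)]
        have hc : Fin.castLE (n+1).le_succ j.castSucc = Fin.castSucc (Fin.castLE n.le_succ j) := by
          ext; simp
        rw [hc]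
        push_cast; ring
      rw [h4, ← Finset.sum_mul]
      have hc2 : Fin.castLE (n+1).le_succ (Fin.last n) = Fin.castSucc (Fin.last n) := by
        ext; simp
      rw [hc2]
      push_cast; ring

lemma sumFin : ∀ n : ℕ, (∑ i : Fin n, ((i : ℝ) + 1)) = (n : ℝ) * (n + 1) / 2 := by
  intro n
  induction n with
  | zero => simp
  | succ n ih =>
      rw [Fin.sum_univ_castSucc]
      simp only [Fin.coe_castSucc, Fin.val_last]
      rw [ih]; push_cast; ring

/-- The characteristic polynomial of `M = A₀ + b₀aᵀ + (1/2)I − H`: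
`det(λI − M) = ∏_{j=1}^{n}(λ − j) − ∑_{j=1}^{n−1} a_j ∏_{i=j+1}^{n}(λ − i) − aₙ`,
and in particular the coefficient of `λ^{n−1}` equals `−(a₁ + n(n+1)/2)`. -/
theorem stmt2 (n : ℕ) (hn : 1 ≤ n) (a : Fin n → ℝ)
    (A₀ : Matrix (Fin n) (Fin n) ℝ)
    (hA₀ : A₀ = Matrix.of fun i j : Fin n => if i.val = j.val + 1 then (1 : ℝ) else 0)
    (b₀ : Fin n → ℝ)
    (hb₀ : b₀ = fun i : Fin n => if i.val = 0 then (1 : ℝ) else 0)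
    (H : Matrix (Fin n) (Fin n) ℝ)
    (hH : H = Matrix.diagonal fun i : Fin n => -((2 * (i.val : ℝ) + 1) / 2))
    (M : Matrix (Fin n) (Fin n) ℝ)
    (hM : M = A₀ + Matrix.vecMulVec b₀ a + (1 / 2 : ℝ) • 1 - H) :
    (∀ lam : ℝ,
      (lam • (1 : Matrix (Fin n) (Fin n) ℝ) - M).det =
        (∏ j ∈ Finset.Icc 1 n, (lam - (j : ℝ)))
          - (∑ j : Fin (n - 1),
              a (Fin.castLE (Nat.sub_le n 1) j) *
                ∏ i ∈ Finset.Icc (j.val + 2) n, (lam - (i : ℝ)))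
          - a ⟨n - 1, by omega⟩) ∧
    M.charpoly.coeff (n - 1) = -(a ⟨0, hn⟩ + (n : ℝ) * (n + 1) / 2) := by
  have hkey : ∀ lam : ℝ, lam • (1 : Matrix (Fin n) (Fin n) ℝ) - M = Nmat n a lam := by
    intro lam
    ext i j
    simp only [hM, hA₀, hb₀, hH, Nmat, Matrix.sub_apply, Matrix.add_apply, Matrix.smul_apply,
      Matrix.one_apply, Matrix.of_apply, Matrix.vecMulVec_apply, Matrix.diagonal_apply,
      smul_eq_mul, Fin.ext_iff]
    by_cases hij : (i : ℕ) = (j : ℕ) <;> simp [hij] <;> ring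
  constructor
  · intro lam
    rw [hkey lam]
    obtain ⟨m, rfl⟩ : ∃ m, n = m + 1 := ⟨n - 1, by omega⟩
    rw [detN m a lam]
    rfl
  · haveI : Nonempty (Fin n) := ⟨⟨0, hn⟩⟩
    have htr := Matrix.trace_eq_neg_charpoly_coeff M
    rw [Fintype.card_fin] at htr
    have h1 : M.charpoly.coeff (n - 1) = -Matrix.trace M := by rw [htr]; ring
    rw [h1]
    have h2 : Matrix.trace M = a ⟨0, hn⟩ + (n : ℝ) * (n + 1) / 2 := by
      rw [Matrix.trace]
      have hd : ∀ i : Fin n, Matrix.diag M i = (if (i:ℕ) = 0 then a i else 0) + ((i:ℝ) + 1) := by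
        intro i
        simp only [hM, hA₀, hb₀, hH, Matrix.diag_apply, Matrix.sub_apply, Matrix.add_apply,
          Matrix.smul_apply, Matrix.one_apply_eq, Matrix.of_apply, Matrix.vecMulVec_apply,
          Matrix.diagonal_apply_eq, smul_eq_mul]
        rw [if_neg (by omega)]
        by_cases h : (i:ℕ) = 0 <;> simp [h] <;> ring
      rw [Finset.sum_congr rfl (fun i _ => hd i), Finset.sum_add_distrib, sumFin]
      congr 1
      have : ∀ i : Fin n, (if (i:ℕ) = 0 then a i else 0) = (if i = ⟨0, hn⟩ then a i else 0) := by
        intro i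
        congr 1
        simp [Fin.ext_iff]
      rw [Finset.sum_congr rfl (fun i _ => this i)]
      simp
    rw [h2]
end

section
/- For all integers s ≥ 1 and k ≥ 1, the determinant Δ_{s,k} of the s×s real matrix with entries 1/((i + j + k − 2)(i + j + k − 1)) for 1 ≤ i, j ≤ s is strictly positive. -/
/-!
Since `∫₀¹ t^n (1-t) dt = 1/((n+1)(n+2))`, the matrix is the moment matrix `∫₀¹ t^(i+j) w(t) dt`
of the weight `w(t) = t^(k-1) (1-t)`. For a weight that is positive on an interval, the quadratic
form of the moment matrix at `x` is `∫ p(t)² w(t) dt` with `p = ∑ xᵢ tⁱ`, which is positive when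
`x ≠ 0` since `p` then has only finitely many roots. So the matrix is positive definite.
-/

open Matrix Polynomial intervalIntegral MeasureTheory Set

theorem integral_pow_mul_one_sub (n : ℕ) :
    ∫ t in (0 : ℝ)..1, t ^ n * (1 - t) = 1 / (((n : ℝ) + 1) * ((n : ℝ) + 2)) := by
  have h : ∀ t : ℝ, t ^ n * (1 - t) = t ^ n - t ^ (n + 1) := fun t => by ring
  simp only [h]
  rw [integral_sub (intervalIntegrable_pow n) (intervalIntegrable_pow (n + 1)),
    integral_pow, integral_pow]
  field_simp
  push_cast
  ring

theorem Polynomial.eval_ofFn {R : Type*} [CommSemiring R] [DecidableEq R] (n : ℕ)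
    (v : Fin n → R) (t : R) : (ofFn n v).eval t = ∑ i : Fin n, v i * t ^ (i : ℕ) := by
  simp [ofFn_eq_sum_monomial, eval_finsetSum]

theorem integral_sq_eval_mul_pos {p : ℝ[X]} (hp : p ≠ 0) {w : ℝ → ℝ} {a b : ℝ} (hab : a < b)
    (hw : IntervalIntegrable w volume a b) (hw_pos : ∀ t ∈ Ioo a b, 0 < w t) :
    0 < ∫ t in a..b, p.eval t ^ 2 * w t := by
  have hw_nonneg : 0 ≤ᵐ[volume.restrict (uIoc a b)] fun t => p.eval t ^ 2 * w t := by
    rw [uIoc_of_le hab.le]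
    refine ae_restrict_of_ae_eq_of_ae_restrict Ioo_ae_eq_Ioc ?_
    filter_upwards [ae_restrict_mem measurableSet_Ioo] with t ht
    exact mul_nonneg (sq_nonneg _) (hw_pos t ht).le
  have hint : IntervalIntegrable (fun t => p.eval t ^ 2 * w t) volume a b :=
    hw.continuousOn_mul (p.continuous.pow 2).continuousOn
  have hsupp : Ioo a b \ {t | p.IsRoot t} ⊆
      Function.support (fun t => p.eval t ^ 2 * w t) ∩ Ioc a b :=
    fun t ⟨ht, hroot⟩ => ⟨mul_ne_zero (pow_ne_zero 2 hroot) (hw_pos t ht).ne',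
      Ioo_subset_Ioc_self ht⟩
  rw [integral_pos_iff_support_of_nonneg_ae' hw_nonneg hint]
  refine ⟨hab, lt_of_lt_of_le ?_ (measure_mono hsupp)⟩
  rw [measure_sdiff_null ((p.finite_setOfPred_isRoot hp).measure_zero _)]
  simpa using hab

noncomputable def momentMatrix (w : ℝ → ℝ) (a b : ℝ) (n : ℕ) : Matrix (Fin n) (Fin n) ℝ :=
  of fun i j => ∫ t in a..b, t ^ (i + j : ℕ) * w t

theorem dotProduct_momentMatrix_mulVec [DecidableEq ℝ] {w : ℝ → ℝ} {a b : ℝ}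
    (hw : IntervalIntegrable w volume a b) {n : ℕ} (x : Fin n → ℝ) :
    x ⬝ᵥ momentMatrix w a b n *ᵥ x = ∫ t in a..b, (ofFn n x).eval t ^ 2 * w t := by
  have hmon : ∀ i j : Fin n, IntervalIntegrable (fun t => x i * x j * (t ^ (i + j : ℕ) * w t))
      volume a b := fun i j =>
    (hw.continuousOn_mul (continuous_pow _).continuousOn).const_mul _
  calc x ⬝ᵥ momentMatrix w a b n *ᵥ x
      = ∑ i, ∑ j, ∫ t in a..b, x i * x j * (t ^ (i + j : ℕ) * w t) := by
        simp only [dotProduct, mulVec, momentMatrix, of_apply, Finset.mul_sum,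
          intervalIntegral.integral_const_mul]
        refine Finset.sum_congr rfl fun i _ => Finset.sum_congr rfl fun j _ => by ring
    _ = ∫ t in a..b, ∑ i, ∑ j, x i * x j * (t ^ (i + j : ℕ) * w t) := by
        have hrow : ∀ i : Fin n, IntervalIntegrable
            (fun t => ∑ j, x i * x j * (t ^ (i + j : ℕ) * w t)) volume a b := fun i => by
          simpa only [Finset.sum_fn] using IntervalIntegrable.sum Finset.univ fun j _ => hmon i j
        rw [intervalIntegral.integral_finsetSum fun i _ => hrow i]
        exact Finset.sum_congr rfl fun i _ =>
          (intervalIntegral.integral_finsetSum fun j _ => hmon i j).symm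
    _ = ∫ t in a..b, (ofFn n x).eval t ^ 2 * w t := by
        refine integral_congr fun t _ => ?_
        rw [eval_ofFn, sq, Finset.sum_mul_sum, Finset.sum_mul]
        refine Finset.sum_congr rfl fun i _ => ?_
        rw [Finset.sum_mul]
        exact Finset.sum_congr rfl fun j _ => by rw [pow_add]; ring

theorem momentMatrix_posDef {w : ℝ → ℝ} {a b : ℝ} (hab : a < b)
    (hw : IntervalIntegrable w volume a b) (hw_pos : ∀ t ∈ Ioo a b, 0 < w t) (n : ℕ) :
    (momentMatrix w a b n).PosDef := by
  classical
  refine posDef_iff_dotProduct_mulVec.mpr ⟨?_, fun x hx => ?_⟩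
  · ext i j
    simp [momentMatrix, add_comm (j : ℕ)]
  · rw [star_trivial, dotProduct_momentMatrix_mulVec hw]
    refine integral_sq_eval_mul_pos ?_ hab hw hw_pos
    rwa [← map_zero (ofFn n), (injective_ofFn n).ne_iff]

theorem stmt6_general (s k : ℕ) (hk : 1 ≤ k) :
    0 < (Matrix.of fun i j : Fin s =>
      (1 : ℝ) / (((i.val + j.val + k : ℕ) : ℝ) * ((i.val + j.val + k + 1 : ℕ) : ℝ))).det := by
  obtain ⟨m, rfl⟩ : ∃ m, k = m + 1 := ⟨k - 1, by omega⟩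
  have hw_pos : ∀ t ∈ Ioo (0 : ℝ) 1, 0 < t ^ m * (1 - t) := fun t ht =>
    mul_pos (pow_pos ht.1 m) (sub_pos.mpr ht.2)
  have hw : IntervalIntegrable (fun t : ℝ => t ^ m * (1 - t)) volume 0 1 :=
    (continuous_pow m).mul (continuous_const.sub continuous_id) |>.intervalIntegrable 0 1
  refine (momentMatrix_posDef zero_lt_one hw hw_pos s).det_pos.trans_eq (congrArg det ?_)
  ext i j
  simp only [momentMatrix, of_apply, ← mul_assoc, ← pow_add, integral_pow_mul_one_sub]
  push_cast
  ring

/-- The determinants `Δ_{s,k}` of the matrices with entries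
`1/((i+j+k−2)(i+j+k−1))` (for `1 ≤ i,j ≤ s`) are strictly positive. -/
theorem stmt6 (s k : ℕ) (hs : 1 ≤ s) (hk : 1 ≤ k) :
    0 < (Matrix.of fun i j : Fin s =>
      (1 : ℝ) / (((i.val + j.val + k : ℕ) : ℝ) * ((i.val + j.val + k + 1 : ℕ) : ℝ))).det :=
  stmt6_general s k hk
end

section
/- For all integers s ≥ 1 and k ≥ 1, the following determinant factorization holds: det((1/((i + j + k − 2)(i + j + k − 1)))_{i,j=1}^s) = (s! / ∏_{m=0}^{s−1}(s + k + m)) · det((1/(i + j + k − 2))_{i,j=1}^s). -/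
/-!
Since `1/(x(x+1)) = 1/x - 1/(x+1)`, the columns of the left matrix are the differences
`b_j - b_{j+1}` of the vectors `b_t = (1/(i+t+k))_i`, `0 ≤ t ≤ s`, and a unitriangular column
operation turns them into `b_j - b_s`. The partial fraction expansion
`∏_{m<s} (x - m) / ∏_{l≤s} (x + l + k) = ∑_{l≤s} ρ_l / (x + l + k)` vanishes at
`x = 0, …, s - 1`, so `∑_l ρ_l b_l = 0`, and comparing leading terms gives `∑_l ρ_l = 1`.
Hence `b_s = -∑_{j<s} (ρ_j/ρ_s) b_j`, and the matrix determinant lemma yields the factor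
`1 + ∑_{j<s} ρ_j/ρ_s = 1/ρ_s = s!/∏_{m<s} (s+k+m)`.
-/

open Matrix Finset Polynomial Nat

namespace Lagrange

variable {F ι : Type*} [Field F] [DecidableEq ι] {s : Finset ι} {v : ι → F} {P : F[X]}

theorem sum_nodalWeight_mul_eval_eq_coeff (hvs : Set.InjOn v s) (hP : P.degree < #s) :
    ∑ i ∈ s, nodalWeight s v i * P.eval (v i) = P.coeff (#s - 1) := by
  simp_rw [coeff_eq_sum hvs hP, nodalWeight, prod_inv_distrib, div_eq_inv_mul]

theorem sum_nodalWeight_mul_inv_sub_mul_eval_eq_zero (hvs : Set.InjOn v s) (hP : P.degree < #s)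
    {x : F} (hx : ∀ i ∈ s, x ≠ v i) (hPx : P.IsRoot x) :
    ∑ i ∈ s, nodalWeight s v i * (x - v i)⁻¹ * P.eval (v i) = 0 := by
  have h := eval_interpolate_not_at_node (fun i => P.eval (v i)) hx
  rw [← eq_interpolate hvs hP, hPx.eq_zero] at h
  exact (mul_eq_zero.mp h.symm).resolve_left (eval_nodal_not_at_node hx)

theorem degree_nodal_range_lt (n : ℕ) (w : ℕ → F) :
    (nodal (range n) w).degree < #(range (n + 1)) := by
  rw [degree_nodal, card_range, card_range]
  exact_mod_cast lt_add_one n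

end Lagrange

section PartialFractions

variable {F : Type*} [Field F]

variable (F) in
/-- `ρ_l := partialFractionCoeff F s k l` are the coefficients of the partial fraction expansion
`∏_{m<s} (x - m) / ∏_{l≤s} (x + l + k) = ∑_{l≤s} ρ_l / (x + l + k)`. -/
noncomputable def partialFractionCoeff (s k l : ℕ) : F :=
  Lagrange.nodalWeight (range (s + 1)) (fun t : ℕ => -((t + k : ℕ) : F)) l *
    (Lagrange.nodal (range s) (fun m : ℕ => (m : F))).eval (-((l + k : ℕ) : F))

theorem neg_natCast_add_injective [CharZero F] (k : ℕ) :
    Function.Injective fun t : ℕ => -((t + k : ℕ) : F) := by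
  intro t t' h
  simpa using h

theorem sum_partialFractionCoeff [CharZero F] (s k : ℕ) :
    ∑ l ∈ range (s + 1), partialFractionCoeff F s k l = 1 := by
  simp only [partialFractionCoeff]
  rw [Lagrange.sum_nodalWeight_mul_eval_eq_coeff (neg_natCast_add_injective k).injOn
    (Lagrange.degree_nodal_range_lt s _), card_range, add_tsub_cancel_right]
  simpa [Lagrange.natDegree_nodal] using
    (Lagrange.nodal_monic (s := range s) (v := fun m : ℕ => (m : F))).coeff_natDegree

theorem sum_partialFractionCoeff_mul_inv_eq_zero [CharZero F] {s k i : ℕ} (hk : 0 < k)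
    (hi : i < s) :
    ∑ l ∈ range (s + 1), partialFractionCoeff F s k l * ((i + l + k : ℕ) : F)⁻¹ = 0 := by
  have hx : ∀ l ∈ range (s + 1), (i : F) ≠ -((l + k : ℕ) : F) := by
    intro l _
    rw [ne_eq, eq_neg_iff_add_eq_zero]
    exact_mod_cast (by omega : i + (l + k) ≠ 0)
  rw [← Lagrange.sum_nodalWeight_mul_inv_sub_mul_eval_eq_zero (neg_natCast_add_injective k).injOn
    (Lagrange.degree_nodal_range_lt s _) hx (Lagrange.eval_nodal_at_node (mem_range.mpr hi))]
  refine sum_congr rfl fun l _ => ?_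
  rw [partialFractionCoeff]
  push_cast
  ring

theorem partialFractionCoeff_self (s k : ℕ) :
    partialFractionCoeff F s k s = (∏ m ∈ range s, ((s + k + m : ℕ) : F)) / s ! := by
  rw [partialFractionCoeff, Lagrange.nodalWeight, range_add_one, erase_insert notMem_range_self,
    Lagrange.eval_nodal, ← descFactorial_self, ← descPochhammer_eval_eq_descFactorial,
    descPochhammer_eval_eq_prod_range, ← prod_mul_distrib, ← prod_div_distrib]
  refine prod_congr rfl fun j _ => ?_
  rw [show -((s + k : ℕ) : F) - -((j + k : ℕ) : F) = -((s : F) - j) by push_cast; ring, inv_neg]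
  push_cast
  ring

end PartialFractions

namespace Matrix

variable {R : Type*} [CommRing R]

theorem det_of_sub_succ_eq_det_of_sub_last {s : ℕ} (b : Fin s → ℕ → R) :
    (of fun i j : Fin s => b i j - b i (j + 1)).det =
      (of fun i j : Fin s => b i j - b i s).det := by
  let U : Matrix (Fin s) (Fin s) R := of fun p j => if j ≤ p then 1 else 0
  have hU : U.det = 1 := by
    rw [det_of_isLowerTriangular U fun p j hpj => if_neg (not_le.mpr hpj)]
    simp [U]
  have hAU : (of fun i j : Fin s => b i j - b i (j + 1)) * U =
      of fun i j : Fin s => b i j - b i s := by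
    ext i j
    have hIco : (range s).filter (fun p => j.val ≤ p) = Ico j.val s := by
      ext p
      simp only [mem_filter, mem_range, mem_Ico]
      omega
    simp only [mul_apply, of_apply, U, mul_ite, mul_one, mul_zero, Fin.le_def]
    rw [Fin.sum_univ_eq_sum_range (fun p => if j.val ≤ p then b i p - b i (p + 1) else 0),
      ← sum_filter, hIco, ← neg_sub, ← sum_Ico_sub (b i) j.is_lt.le, ← sum_neg_distrib]
    simp
  rw [← hAU, det_mul, hU, mul_one]

theorem det_of_sub_mulVec {n : Type*} [Fintype n] [DecidableEq n] (B : Matrix n n R)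
    (u : n → R) :
    (of fun i j => B i j - (B *ᵥ u) i).det = (1 - ∑ j, u j) * B.det := by
  have h : (of fun i j => B i j - (B *ᵥ u) i) =
      B * (1 - replicateCol Unit u * replicateRow Unit fun _ => (1 : R)) := by
    rw [Matrix.mul_sub, Matrix.mul_one]
    ext i j
    simp [mulVec, dotProduct, mul_apply]
  rw [h, det_mul, det_one_sub_mul_comm, mul_comm]
  simp [replicateRow_mul_replicateCol_apply, dotProduct]

theorem det_of_sub_succ_eq_of_sum_mul_eq_zero {K : Type*} [Field K] {s : ℕ}
    (b : Fin s → ℕ → K) {ρ : ℕ → K} (hρ : ρ s ≠ 0)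
    (hdep : ∀ i, ∑ l ∈ range (s + 1), ρ l * b i l = 0) :
    (of fun i j : Fin s => b i j - b i (j + 1)).det =
      (∑ l ∈ range (s + 1), ρ l) / ρ s * (of fun i j : Fin s => b i j).det := by
  let u : Fin s → K := fun j => -(ρ j / ρ s)
  have hlast (i : Fin s) : b i s = ((of fun i j : Fin s => b i j) *ᵥ u) i := by
    have h := hdep i
    simp_rw [mul_comm (ρ _)] at h
    rw [sum_range_succ, ← Fin.sum_univ_eq_sum_range (fun l => b i l * ρ l)] at h
    simp only [mulVec, dotProduct, of_apply, u, mul_neg, sum_neg_distrib, mul_div, ← sum_div]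
    field_simp
    linear_combination h
  have hsum : 1 - ∑ j, u j = (∑ l ∈ range (s + 1), ρ l) / ρ s := by
    rw [sum_range_succ, ← Fin.sum_univ_eq_sum_range ρ]
    simp only [u, sum_neg_distrib, sub_neg_eq_add, ← sum_div]
    field_simp
    ring
  rw [det_of_sub_succ_eq_det_of_sub_last, ← hsum, ← det_of_sub_mulVec]
  simp only [of_apply, hlast]

end Matrix

theorem stmt7_general (s k : ℕ) (hk : 1 ≤ k) :
    (Matrix.of fun i j : Fin s =>
        (1 : ℝ) / (((i.val + j.val + k : ℕ) : ℝ) * ((i.val + j.val + k + 1 : ℕ) : ℝ))).det =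
      ((s.factorial : ℝ) / ∏ m ∈ Finset.range s, ((s + k + m : ℕ) : ℝ)) *
        (Matrix.of fun i j : Fin s => (1 : ℝ) / ((i.val + j.val + k : ℕ) : ℝ)).det := by
  let b : Fin s → ℕ → ℝ := fun i t => 1 / ((i.val + t + k : ℕ) : ℝ)
  have hA : (of fun i j : Fin s =>
      (1 : ℝ) / (((i.val + j.val + k : ℕ) : ℝ) * ((i.val + j.val + k + 1 : ℕ) : ℝ))) =
      of fun i j : Fin s => b i j - b i (j + 1) := by
    ext i j
    have hx : ((i.val + j.val + k : ℕ) : ℝ) ≠ 0 := by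
      exact_mod_cast (by omega : i.val + j.val + k ≠ 0)
    simp only [of_apply, b]
    field_simp
    push_cast
    ring
  have hρ : partialFractionCoeff ℝ s k s ≠ 0 := by
    rw [partialFractionCoeff_self]
    refine div_ne_zero (prod_ne_zero_iff.mpr fun m _ => ?_) (by positivity)
    exact_mod_cast (by omega : s + k + m ≠ 0)
  rw [hA, det_of_sub_succ_eq_of_sum_mul_eq_zero b hρ fun i => by
      simpa [b] using sum_partialFractionCoeff_mul_inv_eq_zero (F := ℝ) hk i.is_lt,
    sum_partialFractionCoeff, partialFractionCoeff_self, one_div_div]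

/-- Determinant factorization:
`det((1/((i+j+k−2)(i+j+k−1)))) = (s! / ((s+k)(s+k+1)⋯(2s+k−1))) · det((1/(i+j+k−2)))`. -/
theorem stmt7 (s k : ℕ) (hs : 1 ≤ s) (hk : 1 ≤ k) :
    (Matrix.of fun i j : Fin s =>
        (1 : ℝ) / (((i.val + j.val + k : ℕ) : ℝ) * ((i.val + j.val + k + 1 : ℕ) : ℝ))).det =
      ((s.factorial : ℝ) / ∏ m ∈ Finset.range s, ((s + k + m : ℕ) : ℝ)) *
        (Matrix.of fun i j : Fin s => (1 : ℝ) / ((i.val + j.val + k : ℕ) : ℝ)).det :=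
  stmt7_general s k hk
end

section
/- Let n ≥ 1, let C be the n×n real matrix with entries C_{ij} = 1/((i + j − 1)(i + j)), let A₀ be the n×n matrix with ones on the subdiagonal, b₀ = e₁, H = diag(−(2i−1)/2)_{i=1}^n, and Dₙ = diag((−1)^{i−1}/(i−1)!)_{i=1}^n. Then the matrix identity ((1/2)I − H + Dₙ^{−1}A₀Dₙ)·C + C·((1/2)I − H + Dₙ^{−1}A₀Dₙ)ᵀ = b₀b₀ᵀ holds. -/
/-! Conjugating the shift `A₀` by `Dₙ` multiplies its `(i+1, i)` entry by `-(i+1)` (indices from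
`0`), so the generator `(1/2)I − H + Dₙ⁻¹A₀Dₙ` is the lower bidiagonal matrix `L` acting by
`(L x)ᵢ = (i+1) xᵢ − i xᵢ₋₁`. For a Hankel matrix `C = (c(i+j))` the entry `(i, j)` of
`LC + CLᵀ` depends only on `s = i+j` and equals `(s+2) c(s) − s c(s−1)`. For
`c(s) = 1/((s+1)(s+2))` this is `1/(s+1) − 1/(s+1) = 0` when `s ≥ 1`, and `1` when `s = 0`. -/

open Matrix Finset

theorem Matrix.inv_diagonal_mul_mul_diagonal {ι K : Type*} [Fintype ι] [DecidableEq ι] [Field K]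
    {d : ι → K} (hd : ∀ i, d i ≠ 0) (A : Matrix ι ι K) :
    (diagonal d)⁻¹ * A * diagonal d = of fun i j => (d i)⁻¹ * A i j * d j := by
  have hinv : (diagonal d)⁻¹ = diagonal fun i => (d i)⁻¹ :=
    inv_eq_left_inv <| by
      rw [diagonal_mul_diagonal, ← diagonal_one]
      exact congrArg diagonal (funext fun i => inv_mul_cancel₀ (hd i))
  ext i j
  rw [hinv, mul_diagonal, diagonal_mul, of_apply]

theorem signedFactorial_inv_mul_succ (j : ℕ) :
    ((-1 : ℝ) ^ (j + 1) / (j + 1).factorial)⁻¹ * ((-1) ^ j / j.factorial) = -(j + 1) := by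
  have hj : (j.factorial : ℝ) ≠ 0 := by positivity
  rw [Nat.factorial_succ, pow_succ]
  push_cast
  field_simp

theorem vecMulVec_indicator_zero {R : Type*} [MulZeroOneClass R] {n : ℕ} :
    vecMulVec (fun i : Fin n => if (i : ℕ) = 0 then (1 : R) else 0)
        (fun i : Fin n => if (i : ℕ) = 0 then (1 : R) else 0) =
      of fun i j : Fin n => if (i : ℕ) + j = 0 then 1 else 0 := by
  ext i j
  simp only [vecMulVec_apply, of_apply, Nat.add_eq_zero_iff, ite_zero_mul_ite_zero, mul_one]

section Hankel

variable {R : Type*} [CommRing R] {n : ℕ}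

variable (R) in
def bidiagSucc (n : ℕ) : Matrix (Fin n) (Fin n) R :=
  diagonal (fun i : Fin n => ((i : ℕ) : R) + 1) -
    of fun i j : Fin n => if (i : ℕ) = (j : ℕ) + 1 then ((i : ℕ) : R) else 0

theorem sum_subdiag_mul (i : Fin n) (g : ℕ → R) :
    ∑ k : Fin n, (if (i : ℕ) = (k : ℕ) + 1 then ((i : ℕ) : R) else 0) * g k =
      (i : ℕ) * g (i - 1) := by
  by_cases hi : (i : ℕ) = 0
  · rw [hi, Nat.cast_zero, zero_mul]
    exact sum_eq_zero fun k _ => by rw [if_neg (by omega), zero_mul]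
  · rw [sum_eq_single (⟨i - 1, by omega⟩ : Fin n), if_pos (by dsimp only; omega)]
    · intro k _ hk
      rw [if_neg fun h => hk (Fin.ext (by dsimp only; omega)), zero_mul]
    · simp

theorem bidiagSucc_mul_hankel_apply (c : ℕ → R) (i j : Fin n) :
    (bidiagSucc R n * of fun i j : Fin n => c (i + j)) i j =
      ((i : ℕ) + 1) * c (i + j) - (i : ℕ) * c (i + j - 1) := by
  rw [bidiagSucc, sub_mul, Matrix.sub_apply, diagonal_mul, mul_apply]
  simp only [of_apply]
  rw [sum_subdiag_mul i fun k => c (k + j)]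
  rcases eq_or_ne (i : ℕ) 0 with hi | hi
  · simp [hi]
  · congr 3
    omega

theorem bidiagSucc_lyapunov_hankel_apply (c : ℕ → R) (i j : Fin n) :
    (bidiagSucc R n * (of fun i j : Fin n => c (i + j)) +
        (of fun i j : Fin n => c (i + j)) * (bidiagSucc R n)ᵀ) i j =
      ((i + j : ℕ) + 2) * c (i + j) - (i + j : ℕ) * c (i + j - 1) := by
  have hsymm : (of fun i j : Fin n => c (i + j))ᵀ = of fun i j : Fin n => c (i + j) := by
    ext i j
    simp [add_comm]
  rw [Matrix.add_apply, ← hsymm, ← transpose_mul, transpose_apply, hsymm,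
    bidiagSucc_mul_hankel_apply, bidiagSucc_mul_hankel_apply, add_comm (j : ℕ)]
  push_cast
  ring

end Hankel

theorem half_sub_diagonal_add_conj_shift_eq_bidiagSucc (n : ℕ) :
    (1 / 2 : ℝ) • 1 - diagonal (fun i : Fin n => -((2 * (i : ℕ) + 1) / 2 : ℝ)) +
        (diagonal fun i : Fin n => (-1 : ℝ) ^ (i : ℕ) / (i : ℕ).factorial)⁻¹ *
          (of fun i j : Fin n => if (i : ℕ) = j + 1 then (1 : ℝ) else 0) *
          diagonal (fun i : Fin n => (-1 : ℝ) ^ (i : ℕ) / (i : ℕ).factorial) =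
      bidiagSucc ℝ n := by
  rw [inv_diagonal_mul_mul_diagonal fun i => by positivity]
  ext i j
  simp only [bidiagSucc, Matrix.add_apply, Matrix.sub_apply, Matrix.smul_apply, smul_eq_mul,
    of_apply, diagonal_apply, one_apply, mul_ite, ite_mul, mul_one, mul_zero, zero_mul]
  split_ifs with hij hsucc hsucc
  · omega
  · subst hij
    ring
  · rw [hsucc, signedFactorial_inv_mul_succ]
    push_cast
    ring
  · simp

theorem add_two_mul_one_div_sub_mul_one_div_eq_ite (s : ℕ) :
    ((s + 2 : ℕ) : ℝ) * (1 / (((s + 1 : ℕ) : ℝ) * ((s + 2 : ℕ) : ℝ))) -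
        (s : ℝ) * (1 / (((s - 1 + 1 : ℕ) : ℝ) * ((s - 1 + 2 : ℕ) : ℝ))) =
      if s = 0 then 1 else 0 := by
  rcases s with _ | s
  · norm_num
  · simp only [Nat.add_sub_cancel, if_neg (Nat.succ_ne_zero s)]
    push_cast
    field_simp
    ring

theorem stmt9_general (n : ℕ)
    (C : Matrix (Fin n) (Fin n) ℝ)
    (hC : C = Matrix.of fun i j : Fin n =>
      (1 : ℝ) / (((i.val + j.val + 1 : ℕ) : ℝ) * ((i.val + j.val + 2 : ℕ) : ℝ)))
    (A₀ : Matrix (Fin n) (Fin n) ℝ)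
    (hA₀ : A₀ = Matrix.of fun i j : Fin n => if i.val = j.val + 1 then (1 : ℝ) else 0)
    (b₀ : Fin n → ℝ)
    (hb₀ : b₀ = fun i : Fin n => if i.val = 0 then (1 : ℝ) else 0)
    (H : Matrix (Fin n) (Fin n) ℝ)
    (hH : H = Matrix.diagonal fun i : Fin n => -((2 * (i.val : ℝ) + 1) / 2))
    (Dn : Matrix (Fin n) (Fin n) ℝ)
    (hDn : Dn = Matrix.diagonal fun i : Fin n =>
      (-1 : ℝ) ^ i.val / (Nat.factorial i.val : ℝ)) :
    ((1 / 2 : ℝ) • 1 - H + Dn⁻¹ * A₀ * Dn) * C +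
      C * ((1 / 2 : ℝ) • 1 - H + Dn⁻¹ * A₀ * Dn)ᵀ = Matrix.vecMulVec b₀ b₀ := by
  subst hC hA₀ hb₀ hH hDn
  rw [half_sub_diagonal_add_conj_shift_eq_bidiagSucc, vecMulVec_indicator_zero]
  ext i j
  rw [bidiagSucc_lyapunov_hankel_apply (fun s => 1 / (((s + 1 : ℕ) : ℝ) * ((s + 2 : ℕ) : ℝ))),
    of_apply, ← add_two_mul_one_div_sub_mul_one_div_eq_ite]
  push_cast
  ring

/-- The Hankel matrix `C` with entries `1/((i+j−1)(i+j))` satisfies the matrix identity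
`((1/2)I − H + Dₙ⁻¹A₀Dₙ)·C + C·((1/2)I − H + Dₙ⁻¹A₀Dₙ)ᵀ = b₀b₀ᵀ`. -/
theorem stmt9 (n : ℕ) (hn : 1 ≤ n)
    (C : Matrix (Fin n) (Fin n) ℝ)
    (hC : C = Matrix.of fun i j : Fin n =>
      (1 : ℝ) / (((i.val + j.val + 1 : ℕ) : ℝ) * ((i.val + j.val + 2 : ℕ) : ℝ)))
    (A₀ : Matrix (Fin n) (Fin n) ℝ)
    (hA₀ : A₀ = Matrix.of fun i j : Fin n => if i.val = j.val + 1 then (1 : ℝ) else 0)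
    (b₀ : Fin n → ℝ)
    (hb₀ : b₀ = fun i : Fin n => if i.val = 0 then (1 : ℝ) else 0)
    (H : Matrix (Fin n) (Fin n) ℝ)
    (hH : H = Matrix.diagonal fun i : Fin n => -((2 * (i.val : ℝ) + 1) / 2))
    (Dn : Matrix (Fin n) (Fin n) ℝ)
    (hDn : Dn = Matrix.diagonal fun i : Fin n =>
      (-1 : ℝ) ^ i.val / (Nat.factorial i.val : ℝ)) :
    ((1 / 2 : ℝ) • 1 - H + Dn⁻¹ * A₀ * Dn) * C +
      C * ((1 / 2 : ℝ) • 1 - H + Dn⁻¹ * A₀ * Dn)ᵀ = Matrix.vecMulVec b₀ b₀ :=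
  stmt9_general n C hC A₀ hA₀ b₀ hb₀ H hH Dn hDn
end

section
/- Let n ≥ 1, let H = diag(−(2i−1)/2)_{i=1}^n, and for Θ > 0 let D(Θ) = diag(Θ^{−(2i−1)/2})_{i=1}^n. Let F be a symmetric positive definite n×n matrix such that F − FH − HF is also positive definite, and let a₀ > 0. Then for every x ∈ ℝⁿ with x ≠ 0, the equation 2a₀Θ = (D(Θ)F D(Θ)x, x) has a unique solution Θ > 0. -/
/-!
Put `z(Θ) = D(Θ) x` and `φ(Θ) = Θ⁻¹ (F z(Θ), z(Θ))`, so that the equation reads `φ(Θ) = 2a₀`.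
Since `z' = Θ⁻¹ H z`, one gets `φ'(Θ) = -Θ⁻² ((F - FH - HF) z, z) < 0`, so `φ` is strictly
decreasing on `(0, ∞)`. Expanding, `φ` is a combination of powers `Θ ^ (pᵢ + pⱼ - 1)` with
negative exponents, so `φ → 0` at `∞`; and coercivity `(F z, z) ≥ ε ‖z‖²` bounds `φ` below by a
positive multiple of one such power, so `φ → ∞` at `0⁺`. The intermediate value theorem
and strict monotonicity give exactly one solution.
-/

open Matrix Filter Topology Set

theorem existsUnique_pos_eq_of_strictAntiOn {f : ℝ → ℝ} (hcont : ContinuousOn f (Ioi 0))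
    (hanti : StrictAntiOn f (Ioi 0)) (h_zero : Tendsto f (𝓝[>] 0) atTop)
    (h_top : Tendsto f atTop (𝓝 0)) {c : ℝ} (hc : 0 < c) :
    ∃! Θ, 0 < Θ ∧ f Θ = c := by
  obtain ⟨a, hfa, ha⟩ := ((h_zero.eventually_gt_atTop c).and self_mem_nhdsWithin).exists
  obtain ⟨b, hfb, hab⟩ := ((h_top.eventually (gt_mem_nhds hc)).and (eventually_ge_atTop a)).exists
  obtain ⟨Θ, hΘ, rfl⟩ := intermediate_value_Icc' hab
    (hcont.mono fun t ht => lt_of_lt_of_le ha ht.1) ⟨hfb.le, hfa.le⟩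
  have hΘ₀ : 0 < Θ := lt_of_lt_of_le ha hΘ.1
  exact ⟨Θ, ⟨hΘ₀, rfl⟩, fun t ⟨ht, hft⟩ => hanti.injOn ht hΘ₀ hft⟩

section Matrix

variable {ι : Type*} [Fintype ι]

theorem Matrix.PosDef.exists_pos_mul_sq_norm_le_dotProduct_mulVec {A : Matrix ι ι ℝ}
    (hA : A.PosDef) : ∃ ε > 0, ∀ z : ι → ℝ, ε * ‖z‖ ^ 2 ≤ z ⬝ᵥ (A *ᵥ z) := by
  rcases isEmpty_or_nonempty ι with hι | hι
  · exact ⟨1, one_pos, fun z => by simp [Subsingleton.elim z 0]⟩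
  have hQ : Continuous fun z : ι → ℝ => z ⬝ᵥ (A *ᵥ z) :=
    continuous_id.dotProduct (continuous_const.matrix_mulVec continuous_id)
  obtain ⟨u, hu, hmin⟩ := (isCompact_sphere (0 : ι → ℝ) 1).exists_isMinOn
    (NormedSpace.sphere_nonempty.mpr zero_le_one) hQ.continuousOn
  have hu₀ : u ≠ 0 := ne_zero_of_mem_unit_sphere ⟨u, hu⟩
  refine ⟨u ⬝ᵥ (A *ᵥ u), by simpa using hA.dotProduct_mulVec_pos hu₀, fun z => ?_⟩
  rcases eq_or_ne z 0 with rfl | hz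
  · simp
  have hz' : 0 < ‖z‖ := norm_pos_iff.mpr hz
  have hmem : ‖z‖⁻¹ • z ∈ Metric.sphere (0 : ι → ℝ) 1 := by
    simp [norm_smul, hz'.ne']
  have hle : u ⬝ᵥ (A *ᵥ u) ≤ ‖z‖⁻¹ * (‖z‖⁻¹ * (z ⬝ᵥ (A *ᵥ z))) := by
    simpa only [mem_ofPred_eq, mulVec_smul, dotProduct_smul, smul_dotProduct, smul_eq_mul]
      using hmin hmem
  calc u ⬝ᵥ (A *ᵥ u) * ‖z‖ ^ 2 ≤ ‖z‖⁻¹ * (‖z‖⁻¹ * (z ⬝ᵥ (A *ᵥ z))) * ‖z‖ ^ 2 := by gcongr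
    _ = z ⬝ᵥ (A *ᵥ z) := by field_simp

theorem HasDerivAt.dotProduct_mulVec {A : Matrix ι ι ℝ} {z : ℝ → ι → ℝ} {z' : ι → ℝ} {t : ℝ}
    (hz : HasDerivAt z z' t) :
    HasDerivAt (fun s => z s ⬝ᵥ (A *ᵥ z s)) (z' ⬝ᵥ (A *ᵥ z t) + z t ⬝ᵥ (A *ᵥ z')) t := by
  have hzi : ∀ i, HasDerivAt (fun s => z s i) (z' i) t := hasDerivAt_pi.mp hz
  have hAz : ∀ i, HasDerivAt (fun s => (A *ᵥ z s) i) ((A *ᵥ z') i) t := fun i => by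
    simpa [mulVec, dotProduct, Finset.mul_sum] using
      HasDerivAt.fun_sum fun j _ => (hzi j).const_mul (A i j)
  simpa only [dotProduct, Pi.mul_apply, Finset.sum_add_distrib] using
    HasDerivAt.fun_sum (u := Finset.univ) fun i _ => (hzi i).mul (hAz i)

variable {R : Type*} [CommSemiring R] [DecidableEq ι]

theorem Matrix.diagonal_mulVec_dotProduct (d v w : ι → R) :
    (diagonal d *ᵥ v) ⬝ᵥ w = v ⬝ᵥ (diagonal d *ᵥ w) := by
  simp only [dotProduct, mulVec_diagonal, mul_left_comm, mul_comm]

theorem Matrix.diagonal_mul_mul_diagonal_mulVec_dotProduct (d x : ι → R) (F : Matrix ι ι R) :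
    ((diagonal d * F * diagonal d) *ᵥ x) ⬝ᵥ x = (diagonal d *ᵥ x) ⬝ᵥ (F *ᵥ (diagonal d *ᵥ x)) := by
  rw [← mulVec_mulVec, ← mulVec_mulVec, diagonal_mulVec_dotProduct, dotProduct_comm]

end Matrix

section FormQuotient

variable {ι : Type*}

/-- `scaleVec p x Θ = Θ ^ (diagonal p) *ᵥ x`; for `p i = -(2i+1)/2` it is `D(Θ) x`. -/
noncomputable def scaleVec (p x : ι → ℝ) (Θ : ℝ) : ι → ℝ := fun i => Θ ^ p i * x i

theorem scaleVec_ne_zero {p x : ι → ℝ} {Θ : ℝ} (hΘ : 0 < Θ) (hx : x ≠ 0) :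
    scaleVec p x Θ ≠ 0 := by
  obtain ⟨i, hi⟩ := Function.ne_iff.mp hx
  exact Function.ne_iff.mpr ⟨i, mul_ne_zero (Real.rpow_pos_of_pos hΘ _).ne' hi⟩

variable [Fintype ι]

noncomputable def formQuotient (F : Matrix ι ι ℝ) (p x : ι → ℝ) (Θ : ℝ) : ℝ :=
  Θ⁻¹ * (scaleVec p x Θ ⬝ᵥ (F *ᵥ scaleVec p x Θ))

variable {F : Matrix ι ι ℝ} {p x : ι → ℝ} {Θ : ℝ}

theorem diagonal_rpow_mulVec [DecidableEq ι] :
    diagonal (fun i => Θ ^ p i) *ᵥ x = scaleVec p x Θ :=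
  funext fun _ => mulVec_diagonal _ _ _

theorem hasDerivAt_scaleVec [DecidableEq ι] (hΘ : 0 < Θ) :
    HasDerivAt (scaleVec p x) (Θ⁻¹ • (diagonal p *ᵥ scaleVec p x Θ)) Θ := by
  refine hasDerivAt_pi.mpr fun i => ?_
  refine ((Real.hasDerivAt_rpow_const (p := p i) (Or.inl hΘ.ne')).mul_const (x i)).congr_deriv ?_
  simp only [scaleVec, Pi.smul_apply, mulVec_diagonal, smul_eq_mul, Real.rpow_sub_one hΘ.ne']
  field_simp

theorem hasDerivAt_formQuotient [DecidableEq ι] (hΘ : 0 < Θ) :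
    HasDerivAt (formQuotient F p x)
      (-(Θ ^ 2)⁻¹ * (scaleVec p x Θ ⬝ᵥ
        ((F - F * diagonal p - diagonal p * F) *ᵥ scaleVec p x Θ))) Θ := by
  refine ((hasDerivAt_inv hΘ.ne').mul (hasDerivAt_scaleVec hΘ).dotProduct_mulVec).congr_deriv ?_
  simp only [sub_mulVec, dotProduct_sub, ← mulVec_mulVec, smul_dotProduct, mulVec_smul,
    dotProduct_smul, smul_eq_mul, diagonal_mulVec_dotProduct]
  field_simp
  ring

theorem continuousOn_formQuotient : ContinuousOn (formQuotient F p x) (Ioi 0) := by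
  classical
  exact fun Θ hΘ => (hasDerivAt_formQuotient hΘ).continuousAt.continuousWithinAt

theorem strictAntiOn_formQuotient [DecidableEq ι]
    (hG : (F - F * diagonal p - diagonal p * F).PosDef) (hx : x ≠ 0) :
    StrictAntiOn (formQuotient F p x) (Ioi 0) := by
  refine strictAntiOn_of_deriv_neg (convex_Ioi 0) continuousOn_formQuotient fun Θ hΘ => ?_
  rw [interior_Ioi] at hΘ
  rw [(hasDerivAt_formQuotient hΘ).deriv, neg_mul, neg_lt_zero]
  have hpos := hG.dotProduct_mulVec_pos (scaleVec_ne_zero (p := p) hΘ hx)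
  rw [star_trivial] at hpos
  exact mul_pos (inv_pos.mpr (pow_pos hΘ 2)) hpos

theorem formQuotient_eq_sum (hΘ : 0 < Θ) :
    formQuotient F p x Θ = ∑ i, ∑ j, F i j * x i * x j * Θ ^ (p i + p j - 1) := by
  simp only [formQuotient, scaleVec, dotProduct, mulVec, Finset.mul_sum]
  refine Finset.sum_congr rfl fun i _ => Finset.sum_congr rfl fun j _ => ?_
  rw [Real.rpow_sub_one hΘ.ne', Real.rpow_add hΘ]
  field_simp

theorem tendsto_formQuotient_atTop (hp : ∀ i, p i < 1 / 2) :
    Tendsto (formQuotient F p x) atTop (𝓝 0) := by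
  have hrpow : ∀ e : ℝ, e < 0 → Tendsto (fun Θ : ℝ => Θ ^ e) atTop (𝓝 0) := fun e he => by
    simpa using tendsto_rpow_neg_atTop (neg_pos.mpr he)
  have hsum : Tendsto (fun Θ => ∑ i, ∑ j, F i j * x i * x j * Θ ^ (p i + p j - 1)) atTop (𝓝 0) := by
    simpa using tendsto_finsetSum _ fun i _ => tendsto_finsetSum _ fun j _ =>
      (hrpow _ (by linarith [hp i, hp j])).const_mul (F i j * x i * x j)
  exact hsum.congr' ((eventually_gt_atTop 0).mono fun Θ hΘ => (formQuotient_eq_sum hΘ).symm)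

theorem tendsto_formQuotient_nhdsGT_zero (hF : F.PosDef) (hp : ∀ i, p i < 1 / 2) (hx : x ≠ 0) :
    Tendsto (formQuotient F p x) (𝓝[>] 0) atTop := by
  obtain ⟨ε, hε, hcoer⟩ := hF.exists_pos_mul_sq_norm_le_dotProduct_mulVec
  obtain ⟨i, hi⟩ : ∃ i, x i ≠ 0 := Function.ne_iff.mp hx
  have hlow : ∀ Θ ∈ Ioi (0 : ℝ), ε * x i ^ 2 * Θ ^ (2 * p i - 1) ≤ formQuotient F p x Θ := by
    intro Θ (hΘ : 0 < Θ)
    have hcoord : (Θ ^ p i * x i) ^ 2 ≤ ‖scaleVec p x Θ‖ ^ 2 := by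
      rw [← sq_abs, ← Real.norm_eq_abs]
      exact pow_le_pow_left₀ (norm_nonneg _) (norm_le_pi_norm (scaleVec p x Θ) i) 2
    calc ε * x i ^ 2 * Θ ^ (2 * p i - 1) = Θ⁻¹ * (ε * (Θ ^ p i * x i) ^ 2) := by
          rw [Real.rpow_sub_one hΘ.ne', mul_comm 2, Real.rpow_mul hΘ.le, Real.rpow_two]
          ring
      _ ≤ Θ⁻¹ * (ε * ‖scaleVec p x Θ‖ ^ 2) := by gcongr
      _ ≤ formQuotient F p x Θ := mul_le_mul_of_nonneg_left (hcoer _) (inv_nonneg.mpr hΘ.le)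
  refine tendsto_atTop_mono' _ (eventually_mem_nhdsWithin.mono hlow) ?_
  exact (tendsto_rpow_neg_nhdsGT_zero (by linarith [hp i])).const_mul_atTop (by positivity)

end FormQuotient

theorem stmt16_general (n : ℕ)
    (H : Matrix (Fin n) (Fin n) ℝ)
    (hH : H = Matrix.diagonal fun i : Fin n => -((2 * (i.val : ℝ) + 1) / 2))
    (D : ℝ → Matrix (Fin n) (Fin n) ℝ)
    (hD : ∀ Θ : ℝ, 0 < Θ →
      D Θ = Matrix.diagonal fun i : Fin n => Θ ^ (-((2 * (i.val : ℝ) + 1) / 2)))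
    (F : Matrix (Fin n) (Fin n) ℝ) (hF : F.PosDef)
    (hFH : (F - F * H - H * F).PosDef)
    (a₀ : ℝ) (ha₀ : 0 < a₀) :
    ∀ x : Fin n → ℝ, x ≠ 0 →
      ∃! Θ : ℝ, 0 < Θ ∧ 2 * a₀ * Θ = ((D Θ * F * D Θ) *ᵥ x) ⬝ᵥ x := by
  intro x hx
  set p : Fin n → ℝ := fun i => -((2 * (i.val : ℝ) + 1) / 2)
  have hp : ∀ i, p i < 1 / 2 := fun i => by
    simp only [p]
    linarith [(i.val.cast_nonneg : (0 : ℝ) ≤ i.val)]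
  have hform : ∀ Θ, 0 < Θ → ((D Θ * F * D Θ) *ᵥ x) ⬝ᵥ x = Θ * formQuotient F p x Θ := by
    intro Θ hΘ
    rw [hD Θ hΘ, diagonal_mul_mul_diagonal_mulVec_dotProduct, diagonal_rpow_mulVec, formQuotient,
      mul_inv_cancel_left₀ hΘ.ne']
  have hequiv : ∀ Θ, (0 < Θ ∧ 2 * a₀ * Θ = ((D Θ * F * D Θ) *ᵥ x) ⬝ᵥ x) ↔
      (0 < Θ ∧ formQuotient F p x Θ = 2 * a₀) := fun Θ => and_congr_right fun hΘ => by
    rw [hform Θ hΘ, mul_comm Θ, mul_left_inj' hΘ.ne', eq_comm]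
  subst hH
  exact (existsUnique_congr hequiv).mpr <| existsUnique_pos_eq_of_strictAntiOn
    continuousOn_formQuotient (strictAntiOn_formQuotient hFH hx)
    (tendsto_formQuotient_nhdsGT_zero hF hp hx) (tendsto_formQuotient_atTop hp) (by positivity)

/-- If `F` and `F − FH − HF` are symmetric positive definite and `a₀ > 0`, then for
every `x ≠ 0` the equation `2a₀Θ = (D(Θ)FD(Θ)x, x)` has a unique solution `Θ > 0`,
where `D(Θ) = diag(Θ^{−(2i−1)/2})`. -/
theorem stmt16 (n : ℕ) (hn : 1 ≤ n)
    (H : Matrix (Fin n) (Fin n) ℝ)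
    (hH : H = Matrix.diagonal fun i : Fin n => -((2 * (i.val : ℝ) + 1) / 2))
    (D : ℝ → Matrix (Fin n) (Fin n) ℝ)
    (hD : ∀ Θ : ℝ, 0 < Θ →
      D Θ = Matrix.diagonal fun i : Fin n => Θ ^ (-((2 * (i.val : ℝ) + 1) / 2)))
    (F : Matrix (Fin n) (Fin n) ℝ) (hF : F.PosDef)
    (hFH : (F - F * H - H * F).PosDef)
    (a₀ : ℝ) (ha₀ : 0 < a₀) :
    ∀ x : Fin n → ℝ, x ≠ 0 →
      ∃! Θ : ℝ, 0 < Θ ∧ 2 * a₀ * Θ = ((D Θ * F * D Θ) *ᵥ x) ⬝ᵥ x :=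
  stmt16_general n H hH D hD F hF hFH a₀ ha₀
end

section
/- Let n ≥ 1, H = diag(−(2i−1)/2)_{i=1}^n, D(Θ) = diag(Θ^{−(2i−1)/2})_{i=1}^n for Θ > 0, let F be a symmetric positive definite n×n matrix with F − FH − HF positive definite, let a ∈ ℝⁿ be nonzero, let d > 0, and let 0 < a₀ ≤ d²/(2(F^{−1}a, a)). For x ≠ 0 let Θ(x) be the unique positive solution of 2a₀Θ = (D(Θ)F D(Θ)x, x), and define the control u(x) = Θ(x)^{−1/2}·(a, D(Θ(x))x) = ∑_{k=1}^n a_k x_k / Θ(x)^k. Then |u(x)| ≤ √(2a₀(F^{−1}a, a)) ≤ d for every x ≠ 0. -/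
/-!
Put `y = D(Θ)x`, so that the defining equation of `Θ` reads `(Fy, y) = 2a₀Θ`. Cauchy–Schwarz for
the inner product `(F·, ·)`, applied to `F⁻¹a` and `y`, gives `(a, y)² ≤ (F⁻¹a, a)(Fy, y) =
2a₀(F⁻¹a, a)Θ`, and dividing by `Θ` bounds `u(x)² = (a, y)²/Θ` by `2a₀(F⁻¹a, a)`.
-/

open Matrix

namespace Matrix

variable {ι : Type*} [Fintype ι]

theorem PosSemidef.dotProduct_mulVec_sq_le {M : Matrix ι ι ℝ} (hM : M.PosSemidef)
    (u v : ι → ℝ) : ((M *ᵥ u) ⬝ᵥ v) ^ 2 ≤ ((M *ᵥ u) ⬝ᵥ u) * ((M *ᵥ v) ⬝ᵥ v) := by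
  let := M.toSeminormedAddCommGroup hM
  let := M.toInnerProductSpace hM
  have h : ((M *ᵥ u) ⬝ᵥ star v) * ((M *ᵥ u) ⬝ᵥ star v) ≤
      ((M *ᵥ v) ⬝ᵥ star v) * ((M *ᵥ u) ⬝ᵥ star u) :=
    real_inner_mul_inner_self_le v u
  simp only [star_trivial] at h
  linarith

variable [DecidableEq ι]

theorem PosDef.dotProduct_sq_le {F : Matrix ι ι ℝ} (hF : F.PosDef) (a y : ι → ℝ) :
    (a ⬝ᵥ y) ^ 2 ≤ ((F⁻¹ *ᵥ a) ⬝ᵥ a) * ((F *ᵥ y) ⬝ᵥ y) := by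
  have hFz : F *ᵥ (F⁻¹ *ᵥ a) = a := by
    rw [mulVec_mulVec, mul_nonsing_inv F ((isUnit_iff_isUnit_det F).mp hF.isUnit), one_mulVec]
  simpa only [hFz, dotProduct_comm a] using hF.posSemidef.dotProduct_mulVec_sq_le (F⁻¹ *ᵥ a) y

theorem PosDef.dotProduct_inv_mulVec_nonneg {F : Matrix ι ι ℝ} (hF : F.PosDef) (a : ι → ℝ) :
    0 ≤ (F⁻¹ *ᵥ a) ⬝ᵥ a := by
  simpa only [star_trivial, dotProduct_comm a] using hF.inv.posSemidef.dotProduct_mulVec_nonneg a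

end Matrix

theorem Matrix.transpose_mul_mul_mulVec_dotProduct {ι R : Type*} [Fintype ι] [CommSemiring R]
    (D F : Matrix ι ι R) (x : ι → R) :
    ((Dᵀ * F * D) *ᵥ x) ⬝ᵥ x = (F *ᵥ (D *ᵥ x)) ⬝ᵥ (D *ᵥ x) := by
  rw [← mulVec_mulVec, ← mulVec_mulVec, dotProduct_comm, dotProduct_mulVec, vecMul_transpose,
    dotProduct_comm]

theorem abs_rpow_neg_half_mul_le {Θ c A : ℝ} (hΘ : 0 < Θ) (hc : c ^ 2 ≤ A * Θ) :
    |Θ ^ (-(1 : ℝ) / 2) * c| ≤ Real.sqrt A := by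
  have hsqrtΘ : 0 < Real.sqrt Θ := Real.sqrt_pos.mpr hΘ
  have hrpow : Θ ^ (-(1 : ℝ) / 2) = (Real.sqrt Θ)⁻¹ := by
    rw [neg_div, Real.rpow_neg hΘ.le, Real.rpow_div_two_eq_sqrt 1 hΘ.le, Real.rpow_one]
  rw [abs_mul, hrpow, abs_of_pos (inv_pos.mpr hsqrtΘ), inv_mul_le_iff₀ hsqrtΘ,
    ← Real.sqrt_sq_eq_abs, mul_comm, ← Real.sqrt_mul' A hΘ.le]
  exact Real.sqrt_le_sqrt hc

theorem Real.sqrt_two_mul_mul_le {a₀ K d : ℝ} (hK : 0 ≤ K) (hd : 0 ≤ d)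
    (ha₀ : a₀ ≤ d ^ 2 / (2 * K)) : Real.sqrt (2 * a₀ * K) ≤ d := by
  rw [Real.sqrt_le_left hd]
  rcases hK.eq_or_lt with rfl | hK
  · simpa using sq_nonneg d
  · rw [le_div_iff₀ (by positivity)] at ha₀
    linarith

theorem stmt17_general (n : ℕ)
    (D : ℝ → Matrix (Fin n) (Fin n) ℝ)
    (hD : ∀ Θ : ℝ, 0 < Θ →
      D Θ = Matrix.diagonal fun i : Fin n => Θ ^ (-((2 * (i.val : ℝ) + 1) / 2)))
    (F : Matrix (Fin n) (Fin n) ℝ) (hF : F.PosDef)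
    (a : Fin n → ℝ) (d : ℝ) (hd : 0 < d)
    (a₀ : ℝ) (ha₀d : a₀ ≤ d ^ 2 / (2 * ((F⁻¹ *ᵥ a) ⬝ᵥ a))) :
    ∀ x : Fin n → ℝ, x ≠ 0 → ∀ Θ : ℝ, 0 < Θ →
      2 * a₀ * Θ = ((D Θ * F * D Θ) *ᵥ x) ⬝ᵥ x →
      |Θ ^ (-(1 : ℝ) / 2) * (a ⬝ᵥ (D Θ *ᵥ x))| ≤
          Real.sqrt (2 * a₀ * ((F⁻¹ *ᵥ a) ⬝ᵥ a)) ∧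
        Real.sqrt (2 * a₀ * ((F⁻¹ *ᵥ a) ⬝ᵥ a)) ≤ d := by
  intro x _ Θ hΘ hEq
  have hDsymm : (D Θ)ᵀ = D Θ := by rw [hD Θ hΘ, diagonal_transpose]
  have hQ : (F *ᵥ (D Θ *ᵥ x)) ⬝ᵥ (D Θ *ᵥ x) = 2 * a₀ * Θ := by
    rw [hEq, ← transpose_mul_mul_mulVec_dotProduct, hDsymm]
  refine ⟨abs_rpow_neg_half_mul_le hΘ ?_, Real.sqrt_two_mul_mul_le
    (hF.dotProduct_inv_mulVec_nonneg a) hd.le ha₀d⟩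
  calc (a ⬝ᵥ (D Θ *ᵥ x)) ^ 2 ≤ ((F⁻¹ *ᵥ a) ⬝ᵥ a) * (2 * a₀ * Θ) := hQ ▸ hF.dotProduct_sq_le _ _
    _ = 2 * a₀ * ((F⁻¹ *ᵥ a) ⬝ᵥ a) * Θ := by ring

/-- Boundedness of the control: if `Θ(x)` is the (unique) positive solution of
`2a₀Θ = (D(Θ)FD(Θ)x, x)` and `0 < a₀ ≤ d²/(2(F⁻¹a, a))`, then the control
`u(x) = Θ(x)^{−1/2}(a, D(Θ(x))x)` satisfies `|u(x)| ≤ √(2a₀(F⁻¹a, a)) ≤ d`. -/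
theorem stmt17 (n : ℕ) (hn : 1 ≤ n)
    (H : Matrix (Fin n) (Fin n) ℝ)
    (hH : H = Matrix.diagonal fun i : Fin n => -((2 * (i.val : ℝ) + 1) / 2))
    (D : ℝ → Matrix (Fin n) (Fin n) ℝ)
    (hD : ∀ Θ : ℝ, 0 < Θ →
      D Θ = Matrix.diagonal fun i : Fin n => Θ ^ (-((2 * (i.val : ℝ) + 1) / 2)))
    (F : Matrix (Fin n) (Fin n) ℝ) (hF : F.PosDef)
    (hFH : (F - F * H - H * F).PosDef)
    (a : Fin n → ℝ) (ha : a ≠ 0) (d : ℝ) (hd : 0 < d)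
    (a₀ : ℝ) (ha₀ : 0 < a₀) (ha₀d : a₀ ≤ d ^ 2 / (2 * ((F⁻¹ *ᵥ a) ⬝ᵥ a))) :
    ∀ x : Fin n → ℝ, x ≠ 0 → ∀ Θ : ℝ, 0 < Θ →
      2 * a₀ * Θ = ((D Θ * F * D Θ) *ᵥ x) ⬝ᵥ x →
      |Θ ^ (-(1 : ℝ) / 2) * (a ⬝ᵥ (D Θ *ᵥ x))| ≤
          Real.sqrt (2 * a₀ * ((F⁻¹ *ᵥ a) ⬝ᵥ a)) ∧
        Real.sqrt (2 * a₀ * ((F⁻¹ *ᵥ a) ⬝ᵥ a)) ≤ d :=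
  stmt17_general n D hD F hF a d hd a₀ ha₀d
end
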